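/- arXiv:2206.01302 — 4 statements merged into one kernel-verified Lean document; each statement's English description precedes it below -/
import Mathlib

section
/- For all σ > 0, ρ with -1 < ρ < 1, and a ∈ ℝ: ∫_ℝ e^u · [∫_{-a}^{∞} (2π(1-ρ^2))^{-1/2} exp(-(v - ρu/σ)^2/(2(1-ρ^2))) dv] · (2πσ^2)^{-1/2} exp(-u^2/(2σ^2)) du = exp(σ^2/2) · Φ(a + σρ). -/
open Real MeasureTheory

/-- The standard normal cumulative distribution function `Φ`. -/
noncomputable def stdNormalCDF (x : ℝ) : ℝ :=
  ∫ t in Set.Iic x, (Real.sqrt (2 * π))⁻¹ * Real.exp (-t ^ 2 / 2)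

lemma aux_shift_Ioi (g : ℝ → ℝ) (a d : ℝ) :
    ∫ x in Set.Ioi a, g (x + d) = ∫ x in Set.Ioi (a + d), g x := by
  rw [← integral_indicator measurableSet_Ioi, ← integral_indicator measurableSet_Ioi,
    ← integral_add_right_eq_self (fun x => (Set.Ioi (a + d)).indicator g x) d]
  congr 1
  ext x
  simp [Set.indicator_apply, Set.mem_Ioi]

lemma aux_gauss_total (m q : ℝ) (hq : 0 < q) :
    ∫ u : ℝ, (Real.sqrt (2 * π * q))⁻¹ * Real.exp (-(u - m) ^ 2 / (2 * q)) = 1 := by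
  have h := ProbabilityTheory.integral_gaussianPDFReal_eq_one m
    (v := q.toNNReal) (by simpa using hq)
  simpa [ProbabilityTheory.gaussianPDFReal, Real.coe_toNNReal _ hq.le] using h

lemma aux_tail (c : ℝ) :
    ∫ v in Set.Ioi c, (Real.sqrt (2 * π))⁻¹ * Real.exp (-v ^ 2 / 2) = stdNormalCDF (-c) := by
  rw [stdNormalCDF, ← integral_comp_neg_Ioi]
  congr with v
  rw [neg_sq]

lemma aux_P2 (σ ρ : ℝ) (hσ : 0 < σ) (hs2 : 0 < 1 - ρ ^ 2) (u v : ℝ) :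
    (Real.sqrt (2 * π * (1 - ρ ^ 2)))⁻¹ * Real.exp (-(v - ρ * u / σ) ^ 2 / (2 * (1 - ρ ^ 2))) *
      ((Real.sqrt (2 * π * σ ^ 2))⁻¹ * Real.exp (-u ^ 2 / (2 * σ ^ 2)))
  = (Real.sqrt (2 * π))⁻¹ * Real.exp (-v ^ 2 / 2) *
      ((Real.sqrt (2 * π * ((1 - ρ ^ 2) * σ ^ 2)))⁻¹ *
        Real.exp (-(u - σ * ρ * v) ^ 2 / (2 * ((1 - ρ ^ 2) * σ ^ 2)))) := by
  have hπ := pi_pos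
  have hσ' : σ ≠ 0 := hσ.ne'
  have hs2' : (1 : ℝ) - ρ ^ 2 ≠ 0 := hs2.ne'
  have hconst : (Real.sqrt (2 * π * (1 - ρ ^ 2)))⁻¹ * (Real.sqrt (2 * π * σ ^ 2))⁻¹
      = (Real.sqrt (2 * π))⁻¹ * (Real.sqrt (2 * π * ((1 - ρ ^ 2) * σ ^ 2)))⁻¹ := by
    rw [← mul_inv, ← mul_inv, ← Real.sqrt_mul (by positivity), ← Real.sqrt_mul (by positivity)]
    congr 2
    ring
  have hexp : Real.exp (-(v - ρ * u / σ) ^ 2 / (2 * (1 - ρ ^ 2))) *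
      Real.exp (-u ^ 2 / (2 * σ ^ 2))
      = Real.exp (-v ^ 2 / 2) *
        Real.exp (-(u - σ * ρ * v) ^ 2 / (2 * ((1 - ρ ^ 2) * σ ^ 2))) := by
    rw [← Real.exp_add, ← Real.exp_add]
    congr 1
    field_simp
    ring
  calc _ = ((Real.sqrt (2 * π * (1 - ρ ^ 2)))⁻¹ * (Real.sqrt (2 * π * σ ^ 2))⁻¹) *
        (Real.exp (-(v - ρ * u / σ) ^ 2 / (2 * (1 - ρ ^ 2))) *
          Real.exp (-u ^ 2 / (2 * σ ^ 2))) := by ring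
    _ = _ := by rw [hconst, hexp]; ring

lemma aux_keyD (σ ρ : ℝ) (hσ : 0 < σ) (hs2 : 0 < 1 - ρ ^ 2) (c : ℝ) :
    ∫ u : ℝ, (∫ v in Set.Ioi c,
        (Real.sqrt (2 * π * (1 - ρ ^ 2)))⁻¹ *
          Real.exp (-(v - ρ * u / σ) ^ 2 / (2 * (1 - ρ ^ 2)))) *
      ((Real.sqrt (2 * π * σ ^ 2))⁻¹ * Real.exp (-u ^ 2 / (2 * σ ^ 2)))
    = stdNormalCDF (-c) := by
  have hπ := pi_pos
  have hσ' : σ ≠ 0 := hσ.ne'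
  have hs2' : (1 : ℝ) - ρ ^ 2 ≠ 0 := hs2.ne'
  set F : ℝ → ℝ → ℝ := fun u v =>
    (Real.sqrt (2 * π * (1 - ρ ^ 2)))⁻¹ *
        Real.exp (-(v - ρ * u / σ) ^ 2 / (2 * (1 - ρ ^ 2))) *
      ((Real.sqrt (2 * π * σ ^ 2))⁻¹ * Real.exp (-u ^ 2 / (2 * σ ^ 2))) with hF
  -- integrability of uncurry F on volume.prod (volume.restrict (Ioi c))
  have hmeas : AEStronglyMeasurable (Function.uncurry F)
      ((volume : Measure ℝ).prod ((volume : Measure ℝ).restrict (Set.Ioi c))) := by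
    have hFu : Function.uncurry F = fun p : ℝ × ℝ =>
        (Real.sqrt (2 * π * (1 - ρ ^ 2)))⁻¹ *
            Real.exp (-(p.2 - ρ * p.1 / σ) ^ 2 / (2 * (1 - ρ ^ 2))) *
          ((Real.sqrt (2 * π * σ ^ 2))⁻¹ * Real.exp (-p.1 ^ 2 / (2 * σ ^ 2))) := rfl
    rw [hFu]
    exact Continuous.aestronglyMeasurable (by fun_prop)
  have hInt : Integrable (Function.uncurry F)
      ((volume : Measure ℝ).prod ((volume : Measure ℝ).restrict (Set.Ioi c))) := by
    set C : ℝ := (Real.sqrt (2 * π * (1 - ρ ^ 2)))⁻¹ * (Real.sqrt (2 * π * σ ^ 2))⁻¹ with hC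
    have hg : Integrable (fun p : ℝ × ℝ =>
        (C * Real.exp (-(1 / (4 * σ ^ 2)) * p.1 ^ 2)) * Real.exp (-(1 / 4 : ℝ) * p.2 ^ 2))
        ((volume : Measure ℝ).prod ((volume : Measure ℝ).restrict (Set.Ioi c))) := by
      exact (((integrable_exp_neg_mul_sq (by positivity : (0:ℝ) < 1 / (4 * σ ^ 2))).const_mul
        C)).mul_prod ((integrable_exp_neg_mul_sq (by norm_num : (0:ℝ) < 1/4)).restrict)
    refine hg.mono hmeas (Filter.Eventually.of_forall fun p => ?_)
    obtain ⟨u, v⟩ := p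
    have hC0 : 0 ≤ C := by positivity
    have key : F u v ≤ (C * Real.exp (-(1 / (4 * σ ^ 2)) * u ^ 2)) *
        Real.exp (-(1 / 4 : ℝ) * v ^ 2) := by
      have hre : (Real.sqrt (2 * π * (1 - ρ ^ 2)))⁻¹ *
          Real.exp (-(v - ρ * u / σ) ^ 2 / (2 * (1 - ρ ^ 2))) *
        ((Real.sqrt (2 * π * σ ^ 2))⁻¹ * Real.exp (-u ^ 2 / (2 * σ ^ 2)))
          = C * Real.exp (-(v - ρ * u / σ) ^ 2 / (2 * (1 - ρ ^ 2)) + -u ^ 2 / (2 * σ ^ 2)) := by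
        rw [Real.exp_add, hC]; ring
      rw [show F u v = (Real.sqrt (2 * π * (1 - ρ ^ 2)))⁻¹ *
          Real.exp (-(v - ρ * u / σ) ^ 2 / (2 * (1 - ρ ^ 2))) *
        ((Real.sqrt (2 * π * σ ^ 2))⁻¹ * Real.exp (-u ^ 2 / (2 * σ ^ 2))) from rfl, hre]
      have hexp : Real.exp (-(v - ρ * u / σ) ^ 2 / (2 * (1 - ρ ^ 2)) + -u ^ 2 / (2 * σ ^ 2))
          ≤ Real.exp (-(1 / (4 * σ ^ 2)) * u ^ 2 + -(1 / 4 : ℝ) * v ^ 2) := by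
        apply Real.exp_le_exp.mpr
        have hid : -(v - ρ * u / σ) ^ 2 / (2 * (1 - ρ ^ 2)) + -u ^ 2 / (2 * σ ^ 2)
            = -v ^ 2 / 2 - (u - σ * ρ * v) ^ 2 / (2 * ((1 - ρ ^ 2) * σ ^ 2)) := by
          field_simp
          ring
        have h1 : -(v - ρ * u / σ) ^ 2 / (2 * (1 - ρ ^ 2)) ≤ 0 := by
          apply div_nonpos_of_nonpos_of_nonneg
          · simpa using sq_nonneg (v - ρ * u / σ)
          · positivity
        have h2 : 0 ≤ (u - σ * ρ * v) ^ 2 / (2 * ((1 - ρ ^ 2) * σ ^ 2)) := by positivity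
        have h3 : -u ^ 2 / (2 * σ ^ 2) = 2 * (-(1 / (4 * σ ^ 2)) * u ^ 2) := by
          field_simp; ring
        have h4 : (-v ^ 2 / 2 : ℝ) = 2 * (-(1 / 4 : ℝ) * v ^ 2) := by ring
        linarith
      calc C * Real.exp (-(v - ρ * u / σ) ^ 2 / (2 * (1 - ρ ^ 2)) + -u ^ 2 / (2 * σ ^ 2))
          ≤ C * Real.exp (-(1 / (4 * σ ^ 2)) * u ^ 2 + -(1 / 4 : ℝ) * v ^ 2) := by
            exact mul_le_mul_of_nonneg_left hexp hC0
        _ = (C * Real.exp (-(1 / (4 * σ ^ 2)) * u ^ 2)) * Real.exp (-(1 / 4 : ℝ) * v ^ 2) := by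
            rw [Real.exp_add]; ring
    have hFnn : 0 ≤ F u v := by
      rw [show F u v = (Real.sqrt (2 * π * (1 - ρ ^ 2)))⁻¹ *
          Real.exp (-(v - ρ * u / σ) ^ 2 / (2 * (1 - ρ ^ 2))) *
        ((Real.sqrt (2 * π * σ ^ 2))⁻¹ * Real.exp (-u ^ 2 / (2 * σ ^ 2))) from rfl]
      positivity
    simp only [Function.uncurry_apply_pair]
    rw [Real.norm_eq_abs, Real.norm_eq_abs, abs_of_nonneg hFnn, abs_of_nonneg (by positivity)]
    exact key
  calc ∫ u : ℝ, (∫ v in Set.Ioi c,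
        (Real.sqrt (2 * π * (1 - ρ ^ 2)))⁻¹ *
          Real.exp (-(v - ρ * u / σ) ^ 2 / (2 * (1 - ρ ^ 2)))) *
      ((Real.sqrt (2 * π * σ ^ 2))⁻¹ * Real.exp (-u ^ 2 / (2 * σ ^ 2)))
      = ∫ u : ℝ, ∫ v in Set.Ioi c, F u v := by
        congr 1; ext u
        rw [← integral_mul_const]
    _ = ∫ v in Set.Ioi c, ∫ u : ℝ, F u v := integral_integral_swap hInt
    _ = ∫ v in Set.Ioi c, (Real.sqrt (2 * π))⁻¹ * Real.exp (-v ^ 2 / 2) := by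
        refine setIntegral_congr_fun measurableSet_Ioi fun v _ => ?_
        have : ∀ u : ℝ, F u v = (Real.sqrt (2 * π))⁻¹ * Real.exp (-v ^ 2 / 2) *
            ((Real.sqrt (2 * π * ((1 - ρ ^ 2) * σ ^ 2)))⁻¹ *
              Real.exp (-(u - σ * ρ * v) ^ 2 / (2 * ((1 - ρ ^ 2) * σ ^ 2)))) :=
          fun u => aux_P2 σ ρ hσ hs2 u v
        rw [show (fun u => F u v) = fun u => (Real.sqrt (2 * π))⁻¹ * Real.exp (-v ^ 2 / 2) *
            ((Real.sqrt (2 * π * ((1 - ρ ^ 2) * σ ^ 2)))⁻¹ *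
              Real.exp (-(u - σ * ρ * v) ^ 2 / (2 * ((1 - ρ ^ 2) * σ ^ 2)))) from funext this,
          integral_const_mul, aux_gauss_total (σ * ρ * v) ((1 - ρ ^ 2) * σ ^ 2) (by positivity),
          mul_one]
    _ = stdNormalCDF (-c) := aux_tail c



/-- The key integral (app1_3) in the proof of Theorem 1: integrating `e^u` against the
`N(0,σ²)` density of `u` times the conditional `N(ρu/σ, 1-ρ²)` upper-tail probability
of `v` yields `exp(σ²/2) Φ(a + σρ)`. -/
theorem integral_exp_times_condTail (σ ρ a : ℝ) (hσ : 0 < σ) (hρ₁ : -1 < ρ) (hρ₂ : ρ < 1) :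
    ∫ u : ℝ, Real.exp u *
        (∫ v in Set.Ioi (-a),
          (Real.sqrt (2 * π * (1 - ρ ^ 2)))⁻¹ *
            Real.exp (-(v - ρ * u / σ) ^ 2 / (2 * (1 - ρ ^ 2)))) *
        ((Real.sqrt (2 * π * σ ^ 2))⁻¹ * Real.exp (-u ^ 2 / (2 * σ ^ 2)))
      = Real.exp (σ ^ 2 / 2) * stdNormalCDF (a + σ * ρ) := by
  have hs2 : (0 : ℝ) < 1 - ρ ^ 2 := by nlinarith
  have hσ' : σ ≠ 0 := hσ.ne'
  have hs2' : (1 : ℝ) - ρ ^ 2 ≠ 0 := hs2.ne'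
  set I : ℝ → ℝ := fun u => ∫ v in Set.Ioi (-a),
      (Real.sqrt (2 * π * (1 - ρ ^ 2)))⁻¹ *
        Real.exp (-(v - ρ * u / σ) ^ 2 / (2 * (1 - ρ ^ 2))) with hI
  calc ∫ u : ℝ, Real.exp u * I u *
        ((Real.sqrt (2 * π * σ ^ 2))⁻¹ * Real.exp (-u ^ 2 / (2 * σ ^ 2)))
      = ∫ u : ℝ, Real.exp (σ ^ 2 / 2) * (I u *
          ((Real.sqrt (2 * π * σ ^ 2))⁻¹ * Real.exp (-(u - σ ^ 2) ^ 2 / (2 * σ ^ 2)))) := by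
        refine integral_congr_ae (Filter.Eventually.of_forall fun u => ?_)
        have hexp : Real.exp u * Real.exp (-u ^ 2 / (2 * σ ^ 2))
            = Real.exp (σ ^ 2 / 2) * Real.exp (-(u - σ ^ 2) ^ 2 / (2 * σ ^ 2)) := by
          rw [← Real.exp_add, ← Real.exp_add]
          congr 1
          field_simp
          ring
        calc Real.exp u * I u *
              ((Real.sqrt (2 * π * σ ^ 2))⁻¹ * Real.exp (-u ^ 2 / (2 * σ ^ 2)))
            = I u * (Real.sqrt (2 * π * σ ^ 2))⁻¹ *
              (Real.exp u * Real.exp (-u ^ 2 / (2 * σ ^ 2))) := by ring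
          _ = I u * (Real.sqrt (2 * π * σ ^ 2))⁻¹ *
              (Real.exp (σ ^ 2 / 2) * Real.exp (-(u - σ ^ 2) ^ 2 / (2 * σ ^ 2))) := by
              rw [hexp]
          _ = _ := by ring
    _ = Real.exp (σ ^ 2 / 2) * ∫ u : ℝ, I u *
          ((Real.sqrt (2 * π * σ ^ 2))⁻¹ * Real.exp (-(u - σ ^ 2) ^ 2 / (2 * σ ^ 2))) :=
        integral_const_mul _ _
    _ = Real.exp (σ ^ 2 / 2) * ∫ u : ℝ, I (u + σ ^ 2) *
          ((Real.sqrt (2 * π * σ ^ 2))⁻¹ * Real.exp (-u ^ 2 / (2 * σ ^ 2))) := by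
        congr 1
        rw [← integral_add_right_eq_self (fun u => I u *
          ((Real.sqrt (2 * π * σ ^ 2))⁻¹ * Real.exp (-(u - σ ^ 2) ^ 2 / (2 * σ ^ 2)))) (σ ^ 2)]
        simp only [add_sub_cancel_right]
    _ = Real.exp (σ ^ 2 / 2) * ∫ u : ℝ, (∫ v in Set.Ioi (-a - ρ * σ),
          (Real.sqrt (2 * π * (1 - ρ ^ 2)))⁻¹ *
            Real.exp (-(v - ρ * u / σ) ^ 2 / (2 * (1 - ρ ^ 2)))) *
          ((Real.sqrt (2 * π * σ ^ 2))⁻¹ * Real.exp (-u ^ 2 / (2 * σ ^ 2))) := by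
        congr 1
        refine integral_congr_ae (Filter.Eventually.of_forall fun u => ?_)
        dsimp only
        congr 1
        calc I (u + σ ^ 2)
            = ∫ v in Set.Ioi (-a), (fun w => (Real.sqrt (2 * π * (1 - ρ ^ 2)))⁻¹ *
                Real.exp (-(w - ρ * u / σ) ^ 2 / (2 * (1 - ρ ^ 2)))) (v + -(ρ * σ)) := by
              rw [hI]
              refine setIntegral_congr_fun measurableSet_Ioi fun v _ => ?_
              congr 2
              field_simp
              ring
          _ = ∫ v in Set.Ioi (-a + -(ρ * σ)), (Real.sqrt (2 * π * (1 - ρ ^ 2)))⁻¹ *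
                Real.exp (-(v - ρ * u / σ) ^ 2 / (2 * (1 - ρ ^ 2))) :=
              aux_shift_Ioi (fun w => (Real.sqrt (2 * π * (1 - ρ ^ 2)))⁻¹ *
                Real.exp (-(w - ρ * u / σ) ^ 2 / (2 * (1 - ρ ^ 2)))) (-a) (-(ρ * σ))
          _ = _ := by norm_num [sub_eq_add_neg]
    _ = Real.exp (σ ^ 2 / 2) * stdNormalCDF (-(-a - ρ * σ)) := by
        rw [aux_keyD σ ρ hσ hs2 (-a - ρ * σ)]
    _ = _ := by rw [show -(-a - ρ * σ) = a + σ * ρ by ring]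
end

section
/- (M-step maximizer.) Let n ≥ 1, let c_1, …, c_n be positive real numbers, and let D ⊆ {1, …, n} be a nonempty set (the event indices). For λ = (λ_i)_{i ∈ D} with λ_i > 0 for all i ∈ D, define F(λ) := Σ_{i ∈ D} log λ_i − Σ_{i=1}^{n} (Σ_{j ∈ D, j ≤ i} λ_j) c_i. Define λ̂_i := 1 / (Σ_{j = i}^{n} c_j) for i ∈ D. Then λ̂_i > 0 for all i ∈ D, and for every λ with λ_i > 0 for all i ∈ D, F(λ) ≤ F(λ̂), with equality if and only if λ_i = λ̂_i for all i ∈ D. -/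
open Finset

/-!
Exchanging the order of summation turns the cumulative-hazard term into
`∑_{j ∈ D} λ_j S_j` with the tail sums `S_j = ∑_{i ≥ j} c_i`, so `F` separates into the
coordinate functions `λ_j ↦ log λ_j - λ_j S_j`. Each is strictly concave with unique
maximizer `1 / S_j`, by `log y ≤ y - 1` (equality only at `y = 1`) applied to `y = λ_j S_j`.
-/

namespace Real

theorem log_sub_mul_le_log_inv_sub_inv_mul {s x : ℝ} (hs : 0 < s) (hx : 0 < x) :
    log x - x * s ≤ log s⁻¹ - s⁻¹ * s := by
  have h := log_le_sub_one_of_pos (mul_pos hx hs)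
  rw [log_mul hx.ne' hs.ne'] at h
  rw [log_inv, inv_mul_cancel₀ hs.ne']
  linarith

theorem log_sub_mul_eq_log_inv_sub_inv_mul_iff {s x : ℝ} (hs : 0 < s) (hx : 0 < x) :
    log x - x * s = log s⁻¹ - s⁻¹ * s ↔ x = s⁻¹ := by
  refine ⟨fun h => ?_, fun h => h ▸ rfl⟩
  by_contra hne
  have hxs : x * s ≠ 1 := fun h1 => hne (eq_inv_of_mul_eq_one_left h1)
  have hlt := log_lt_sub_one_of_pos (mul_pos hx hs) hxs
  rw [log_mul hx.ne' hs.ne'] at hlt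
  rw [log_inv, inv_mul_cancel₀ hs.ne'] at h
  linarith

end Real

theorem sum_Icc_sum_filter_le_mul {a n : ℕ} {D : Finset ℕ} (hD : ∀ j ∈ D, a ≤ j)
    (lam c : ℕ → ℝ) :
    ∑ i ∈ Icc a n, (∑ j ∈ D.filter (· ≤ i), lam j) * c i =
      ∑ j ∈ D, lam j * ∑ i ∈ Icc j n, c i := by
  simp_rw [sum_mul, sum_filter]
  rw [sum_comm]
  refine sum_congr rfl fun j hj => ?_
  have hIcc : (Icc a n).filter (j ≤ ·) = Icc j n := by
    ext i
    simp only [mem_filter, mem_Icc]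
    have := hD j hj
    omega
  rw [← sum_filter, hIcc, mul_sum]

theorem sum_Icc_pos_of_mem_Icc {a n i : ℕ} {c : ℕ → ℝ} (hc : ∀ j ∈ Icc a n, 0 < c j)
    (hi : i ∈ Icc a n) : 0 < ∑ j ∈ Icc i n, c j := by
  obtain ⟨hai, hin⟩ := mem_Icc.mp hi
  refine sum_pos (fun j hj => hc j ?_) ⟨i, mem_Icc.mpr ⟨le_rfl, hin⟩⟩
  exact mem_Icc.mpr ⟨hai.trans (mem_Icc.mp hj).1, (mem_Icc.mp hj).2⟩

theorem mStep_maximizer_general (n : ℕ) (c : ℕ → ℝ)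
    (hc : ∀ i ∈ Finset.Icc 1 n, 0 < c i)
    (D : Finset ℕ) (hD : D ⊆ Finset.Icc 1 n) :
    let F : (ℕ → ℝ) → ℝ := fun lam =>
      (∑ i ∈ D, Real.log (lam i)) -
        ∑ i ∈ Finset.Icc 1 n, (∑ j ∈ D.filter (fun j => j ≤ i), lam j) * c i
    let lamHat : ℕ → ℝ := fun i => 1 / ∑ j ∈ Finset.Icc i n, c j
    (∀ i ∈ D, 0 < lamHat i) ∧
      ∀ lam : ℕ → ℝ, (∀ i ∈ D, 0 < lam i) →
        F lam ≤ F lamHat ∧ (F lam = F lamHat ↔ ∀ i ∈ D, lam i = lamHat i) := by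
  intro F lamHat
  set S : ℕ → ℝ := fun i => ∑ j ∈ Icc i n, c j
  have hS : ∀ i ∈ D, 0 < S i := fun i hi => sum_Icc_pos_of_mem_Icc hc (hD hi)
  have hlamHat : lamHat = fun i => (S i)⁻¹ := funext fun i => one_div _
  have hF : ∀ lam, F lam = ∑ i ∈ D, (Real.log (lam i) - lam i * S i) := fun lam => by
    rw [sum_sub_distrib, ← sum_Icc_sum_filter_le_mul (fun j hj => (mem_Icc.mp (hD hj)).1)]
  refine ⟨fun i hi => one_div_pos.mpr (hS i hi), fun lam hlam => ?_⟩
  have hle : ∀ i ∈ D, Real.log (lam i) - lam i * S i ≤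
      Real.log (lamHat i) - lamHat i * S i := fun i hi => by
    rw [hlamHat]
    exact Real.log_sub_mul_le_log_inv_sub_inv_mul (hS i hi) (hlam i hi)
  rw [hF, hF]
  refine ⟨sum_le_sum hle, (sum_eq_sum_iff_of_le hle).trans (forall₂_congr fun i hi => ?_)⟩
  rw [hlamHat]
  exact Real.log_sub_mul_eq_log_inv_sub_inv_mul_iff (hS i hi) (hlam i hi)

/-- M-step maximizer: the Breslow-type estimator `λ̂_i = 1/∑_{j ≥ i} c_j` uniquely
maximizes `F(λ) = ∑_{i ∈ D} log λ_i − ∑_{i=1}^n (∑_{j ∈ D, j ≤ i} λ_j) c_i` over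
positive baseline hazard jump sizes `(λ_i)_{i ∈ D}`. -/
theorem mStep_maximizer (n : ℕ) (hn : 1 ≤ n) (c : ℕ → ℝ)
    (hc : ∀ i ∈ Finset.Icc 1 n, 0 < c i)
    (D : Finset ℕ) (hD : D ⊆ Finset.Icc 1 n) (hDne : D.Nonempty) :
    let F : (ℕ → ℝ) → ℝ := fun lam =>
      (∑ i ∈ D, Real.log (lam i)) -
        ∑ i ∈ Finset.Icc 1 n, (∑ j ∈ D.filter (fun j => j ≤ i), lam j) * c i
    let lamHat : ℕ → ℝ := fun i => 1 / ∑ j ∈ Finset.Icc i n, c j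
    (∀ i ∈ D, 0 < lamHat i) ∧
      ∀ lam : ℕ → ℝ, (∀ i ∈ D, 0 < lam i) →
        F lam ≤ F lamHat ∧ (F lam = F lamHat ↔ ∀ i ∈ D, lam i = lamHat i) :=
  mStep_maximizer_general n c hc D hD
end

section
/- (Parameter identification; core of Theorem 1.) Let Φ be the standard normal cumulative distribution function. Let p, K ≥ 1, λ*, λ⁰ > 0, β*, β⁰ ∈ ℝ^p, α*, α⁰ ∈ ℝ^K, and ρ*, ρ⁰ ∈ (−1, 1). Suppose that for all x_t ∈ ℝ^p, all x_w ∈ ℝ^K, and all w ∈ {0, 1}: λ* exp(⟨x_t, β*⟩) Φ(⟨x_w, α*⟩ + ρ*)^w (1 − Φ(⟨x_w, α*⟩ + ρ*))^{1−w} = λ⁰ exp(⟨x_t, β⁰⟩) Φ(⟨x_w, α⁰⟩ + ρ⁰)^w (1 − Φ(⟨x_w, α⁰⟩ + ρ⁰))^{1−w}. Then λ* = λ⁰, β* = β⁰, α* = α⁰, and ρ* = ρ⁰. -/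
open Real MeasureTheory

theorem strictMono_integral_Iic {f : ℝ → ℝ} (hf : Integrable f) (hpos : ∀ t, 0 < f t) :
    StrictMono fun x => ∫ t in Set.Iic x, f t := by
  intro a b hab
  have hdiff := intervalIntegral.integral_Iic_sub_Iic (a := a) (b := b)
    hf.integrableOn hf.integrableOn
  have hmid := intervalIntegral.intervalIntegral_pos_of_pos hf.intervalIntegrable hpos hab
  dsimp only
  linarith

theorem integrable_stdNormalDensity :
    Integrable fun t : ℝ => (Real.sqrt (2 * π))⁻¹ * Real.exp (-t ^ 2 / 2) := by
  convert (integrable_exp_neg_mul_sq (one_half_pos (α := ℝ))).const_mul (Real.sqrt (2 * π))⁻¹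
    using 4
  ring

theorem stdNormalCDF_strictMono : StrictMono stdNormalCDF :=
  strictMono_integral_Iic integrable_stdNormalDensity fun _ => by positivity

section LinearForms

variable {ι R : Type*} [Fintype ι]

theorem eq_of_forall_sum_mul_eq [Semiring R] {a b : ι → R}
    (h : ∀ x : ι → R, ∑ i, x i * a i = ∑ i, x i * b i) : a = b := by
  classical
  funext j
  simpa [Pi.single_apply] using h (Pi.single j 1)

theorem eq_of_forall_sum_mul_add_eq [Ring R] {a b : ι → R} {c d : R}
    (h : ∀ x : ι → R, ∑ i, x i * a i + c = ∑ i, x i * b i + d) : a = b ∧ c = d := by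
  have hcd : c = d := by simpa using h 0
  subst hcd
  exact ⟨eq_of_forall_sum_mul_eq fun x => add_right_cancel (h x), rfl⟩

theorem eq_of_forall_mul_exp_sum_eq {a b : ι → ℝ} {c d : ℝ} (hc : 0 < c)
    (h : ∀ x : ι → ℝ, c * exp (∑ i, x i * a i) = d * exp (∑ i, x i * b i)) :
    c = d ∧ a = b := by
  have hcd : c = d := by simpa using h 0
  subst hcd
  exact ⟨rfl, eq_of_forall_sum_mul_eq fun x => exp_injective (mul_left_cancel₀ hc.ne' (h x))⟩

end LinearForms

theorem parameter_identification_general (p K : ℕ)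
    (lams lam0 : ℝ) (hlams : 0 < lams)
    (βs β0 : Fin p → ℝ) (αs α0 : Fin K → ℝ) (ρs ρ0 : ℝ)
    (h : ∀ (xt : Fin p → ℝ) (xw : Fin K → ℝ) (w : ℕ), w = 0 ∨ w = 1 →
      lams * Real.exp (∑ i, xt i * βs i) *
          stdNormalCDF ((∑ i, xw i * αs i) + ρs) ^ w *
          (1 - stdNormalCDF ((∑ i, xw i * αs i) + ρs)) ^ (1 - w)
        = lam0 * Real.exp (∑ i, xt i * β0 i) *
            stdNormalCDF ((∑ i, xw i * α0 i) + ρ0) ^ w *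
            (1 - stdNormalCDF ((∑ i, xw i * α0 i) + ρ0)) ^ (1 - w)) :
    lams = lam0 ∧ βs = β0 ∧ αs = α0 ∧ ρs = ρ0 := by
  have treated xt xw := by simpa using h xt xw 1 (Or.inr rfl)
  have untreated xt xw := by simpa using h xt xw 0 (Or.inl rfl)
  -- Summing over `w` removes the probit factor and leaves the Cox part.
  obtain ⟨rfl, rfl⟩ : lams = lam0 ∧ βs = β0 :=
    eq_of_forall_mul_exp_sum_eq hlams fun xt => by
      linear_combination treated xt 0 + untreated xt 0
  obtain ⟨hα, hρ⟩ := eq_of_forall_sum_mul_add_eq fun xw =>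
    stdNormalCDF_strictMono.injective (mul_left_cancel₀ (by positivity) (treated 0 xw))
  exact ⟨rfl, rfl, hα, hρ⟩

/-- Parameter identification (core of Theorem 1): if two parameter vectors produce
the same per-subject integrated observed-likelihood contribution
`λ exp(⟨x_t, β⟩) Φ(⟨x_w, α⟩ + ρ)^w (1 − Φ(⟨x_w, α⟩ + ρ))^{1−w}`
for all covariates `x_t`, `x_w` and treatments `w ∈ {0,1}`, then they coincide. -/
theorem parameter_identification (p K : ℕ) (hp : 1 ≤ p) (hK : 1 ≤ K)
    (lams lam0 : ℝ) (hlams : 0 < lams) (hlam0 : 0 < lam0)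
    (βs β0 : Fin p → ℝ) (αs α0 : Fin K → ℝ) (ρs ρ0 : ℝ)
    (hρs₁ : -1 < ρs) (hρs₂ : ρs < 1) (hρ0₁ : -1 < ρ0) (hρ0₂ : ρ0 < 1)
    (h : ∀ (xt : Fin p → ℝ) (xw : Fin K → ℝ) (w : ℕ), w = 0 ∨ w = 1 →
      lams * Real.exp (∑ i, xt i * βs i) *
          stdNormalCDF ((∑ i, xw i * αs i) + ρs) ^ w *
          (1 - stdNormalCDF ((∑ i, xw i * αs i) + ρs)) ^ (1 - w)
        = lam0 * Real.exp (∑ i, xt i * β0 i) *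
            stdNormalCDF ((∑ i, xw i * α0 i) + ρ0) ^ w *
            (1 - stdNormalCDF ((∑ i, xw i * α0 i) + ρ0)) ^ (1 - w)) :
    lams = lam0 ∧ βs = β0 ∧ αs = α0 ∧ ρs = ρ0 :=
  parameter_identification_general p K lams lam0 hlams βs β0 αs α0 ρs ρ0 h
end

section
/- (Non-identifiability without the conditions of Theorem 1.) Let Φ be the standard normal cumulative distribution function. Fix p, K ≥ 1, β ∈ ℝ^p, α ∈ ℝ^K, λ⁰ > 0, β₀⁰ ∈ ℝ, σ⁰ > 0, α₀⁰ ∈ ℝ, ρ⁰ ∈ (−1, 1). For any σ* > 0, β₀* ∈ ℝ, ρ* ∈ (−1, 1), define λ* := λ⁰ exp(β₀⁰ − β₀* + (σ⁰² − σ*²)/2) and α₀* := α₀⁰ + σ⁰ρ⁰ − σ*ρ*. Then λ* > 0, and for all x_t ∈ ℝ^p, x_w ∈ ℝ^K, and w ∈ {0, 1}: λ* exp(β₀* + ⟨x_t, β⟩ + σ*²/2) Φ(α₀* + ⟨x_w, α⟩ + σ*ρ*)^w (1 − Φ(α₀* + ⟨x_w, α⟩ + σ*ρ*))^{1−w} =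 λ⁰ exp(β₀⁰ + ⟨x_t, β⟩ + σ⁰²/2) Φ(α₀⁰ + ⟨x_w, α⟩ + σ⁰ρ⁰)^w (1 − Φ(α₀⁰ + ⟨x_w, α⟩ + σ⁰ρ⁰))^{1−w}. In particular, if the frailty standard deviation σ_u is not fixed, or intercepts β₀ and α₀ are included, distinct parameter vectors produce identical integrated likelihood contributions for all covariates. -/
/-!
The integrated contribution depends on `(λ, β₀, σ)` only through the scale `λ exp (β₀ + σ² / 2)`
and on `(α₀, σ, ρ)` only through the probit shift `α₀ + σ ρ`; the starred parameters are chosen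
so that both stay fixed.
-/

open Real MeasureTheory

/-- `η` and `ζ` stand for the linear predictors `⟨x_t, β⟩` and `⟨x_w, α⟩`; `F` is the link
function (`Φ` for the probit model). -/
noncomputable def integratedContribution (F : ℝ → ℝ) (lam β₀ σ α₀ ρ η ζ : ℝ) (w : ℕ) : ℝ :=
  lam * exp (β₀ + η + σ ^ 2 / 2) * F (α₀ + ζ + σ * ρ) ^ w *
    (1 - F (α₀ + ζ + σ * ρ)) ^ (1 - w)

theorem integratedContribution_congr (F : ℝ → ℝ) {lam β₀ σ α₀ ρ lam' β₀' σ' α₀' ρ' : ℝ}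
    (hscale : lam * exp (β₀ + σ ^ 2 / 2) = lam' * exp (β₀' + σ' ^ 2 / 2))
    (hshift : α₀ + σ * ρ = α₀' + σ' * ρ') (η ζ : ℝ) (w : ℕ) :
    integratedContribution F lam β₀ σ α₀ ρ η ζ w =
      integratedContribution F lam' β₀' σ' α₀' ρ' η ζ w := by
  have hexp (l b s : ℝ) : l * exp (b + η + s ^ 2 / 2) = l * exp (b + s ^ 2 / 2) * exp η := by
    rw [mul_assoc, ← exp_add, add_right_comm b η]
  have harg (a s r : ℝ) : a + ζ + s * r = a + s * r + ζ := add_right_comm a ζ (s * r)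
  simp only [integratedContribution, hexp, harg, hscale, hshift]

theorem non_identifiability_general (p K : ℕ)
    (β : Fin p → ℝ) (α : Fin K → ℝ)
    (lam0 : ℝ) (hlam0 : 0 < lam0) (β00 : ℝ) (σ0 : ℝ) (α00 : ℝ)
    (ρ0 : ℝ)
    (σs : ℝ) (β0s : ℝ) (ρs : ℝ) :
    let lams : ℝ := lam0 * Real.exp (β00 - β0s + (σ0 ^ 2 - σs ^ 2) / 2)
    let α0s : ℝ := α00 + σ0 * ρ0 - σs * ρs
    0 < lams ∧
      ∀ (xt : Fin p → ℝ) (xw : Fin K → ℝ) (w : ℕ), w = 0 ∨ w = 1 →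
        lams * Real.exp (β0s + (∑ i, xt i * β i) + σs ^ 2 / 2) *
            stdNormalCDF (α0s + (∑ i, xw i * α i) + σs * ρs) ^ w *
            (1 - stdNormalCDF (α0s + (∑ i, xw i * α i) + σs * ρs)) ^ (1 - w)
          = lam0 * Real.exp (β00 + (∑ i, xt i * β i) + σ0 ^ 2 / 2) *
              stdNormalCDF (α00 + (∑ i, xw i * α i) + σ0 * ρ0) ^ w *
              (1 - stdNormalCDF (α00 + (∑ i, xw i * α i) + σ0 * ρ0)) ^ (1 - w) := by
  intro lams α0s
  have hscale : lams * exp (β0s + σs ^ 2 / 2) = lam0 * exp (β00 + σ0 ^ 2 / 2) := by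
    rw [mul_assoc, ← exp_add]
    ring_nf
  have hshift : α0s + σs * ρs = α00 + σ0 * ρ0 := by ring
  exact ⟨mul_pos hlam0 (exp_pos _), fun xt xw w _ =>
    integratedContribution_congr stdNormalCDF hscale hshift _ _ w⟩

/-- Non-identifiability without the conditions of Theorem 1: if the frailty standard
deviation `σ` is not fixed, or intercepts `β₀` and `α₀` are included, then the
distinct parameter vector `(λ*, β₀*, σ*, α₀*, ρ*)` defined by
`λ* = λ⁰ exp(β₀⁰ − β₀* + (σ⁰² − σ*²)/2)` and `α₀* = α₀⁰ + σ⁰ρ⁰ − σ*ρ*` produces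
identical integrated likelihood contributions for all covariates. -/
theorem non_identifiability (p K : ℕ) (hp : 1 ≤ p) (hK : 1 ≤ K)
    (β : Fin p → ℝ) (α : Fin K → ℝ)
    (lam0 : ℝ) (hlam0 : 0 < lam0) (β00 : ℝ) (σ0 : ℝ) (hσ0 : 0 < σ0) (α00 : ℝ)
    (ρ0 : ℝ) (hρ0₁ : -1 < ρ0) (hρ0₂ : ρ0 < 1)
    (σs : ℝ) (hσs : 0 < σs) (β0s : ℝ) (ρs : ℝ) (hρs₁ : -1 < ρs) (hρs₂ : ρs < 1) :
    let lams : ℝ := lam0 * Real.exp (β00 - β0s + (σ0 ^ 2 - σs ^ 2) / 2)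
    let α0s : ℝ := α00 + σ0 * ρ0 - σs * ρs
    0 < lams ∧
      ∀ (xt : Fin p → ℝ) (xw : Fin K → ℝ) (w : ℕ), w = 0 ∨ w = 1 →
        lams * Real.exp (β0s + (∑ i, xt i * β i) + σs ^ 2 / 2) *
            stdNormalCDF (α0s + (∑ i, xw i * α i) + σs * ρs) ^ w *
            (1 - stdNormalCDF (α0s + (∑ i, xw i * α i) + σs * ρs)) ^ (1 - w)
          = lam0 * Real.exp (β00 + (∑ i, xt i * β i) + σ0 ^ 2 / 2) *
              stdNormalCDF (α00 + (∑ i, xw i * α i) + σ0 * ρ0) ^ w *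
              (1 - stdNormalCDF (α00 + (∑ i, xw i * α i) + σ0 * ρ0)) ^ (1 - w) :=
  non_identifiability_general p K β α lam0 hlam0 β00 σ0 α00 ρ0 σs β0s ρs
end
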